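/- Weakening respects environment typing: if the environments U (update semantics) and V (value semantics) correspond to context Γ with read-only pointer set r and writable pointer set w under store μ, and Γ weakens to Γ' (every dropped binding has a type of kind containing D, i.e. discardable), then there exists r' ⊆ r such that U and V correspond to Γ' with pointer sets r' and the same w under μ. -/

import Mathlib

/-- Permissions: Discardable, Shareable, Escapable. -/
inductive Perm | D | S | E
deriving DecidableEq

/-- Kinds are sets of permissions. -/
abbrev Kind := Set Perm

/-- Storage modes. -/
inductive Mode | readOnly | writable | unboxed

/-- The kind of a mode. -/
def kindOf : Mode → Kind
  | .readOnly => {Perm.D, Perm.S}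
  | .writable => {Perm.E}
  | .unboxed  => {Perm.D, Perm.S, Perm.E}

/-- (Closed) types: unit, primitives, and records with possibly-taken fields
    (`true` = taken) and a storage mode. -/
inductive Ty
  | unit
  | prim
  | record (fs : List (Ty × Bool)) (m : Mode)

/-- The kinding judgement for closed types. -/
inductive Kinding : Ty → Kind → Prop
  | unit : Kinding .unit κ
  | prim : Kinding .prim κ
  | record : κ ⊆ kindOf m → (∀ p ∈ fs, p.2 = false → Kinding p.1 κ) →
      Kinding (.record fs m) κ

abbrev Ptr := ℕ

/-- Update-semantics values: literals, unit, records, and pointers. -/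
inductive UVal
  | lit (n : ℕ)
  | unit
  | rcd (us : List UVal)
  | ptr (p : Ptr)

/-- Value-semantics values: literals, unit, and records. -/
inductive VVal
  | lit (n : ℕ)
  | unit
  | rcd (vs : List VVal)

/-- Mutable stores: partial maps from pointers to update-semantics values. -/
abbrev Store := Ptr → Option UVal

mutual
/-- The correspondence relation `u | μ : v : τ [ro: r, rw: w]` between an
    update-semantics value (with store) and a value-semantics value at type τ,
    collecting read-only pointers r and writable pointers w reachable from u. -/
inductive Corr : UVal → Store → VVal → Ty → Set Ptr → Set Ptr → Prop
  | lit : Corr (.lit n) μ (.lit n) .prim ∅ ∅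
  | unit : Corr .unit μ .unit .unit ∅ ∅
  | recU : CorrFields us μ vs fs r w →
      Corr (.rcd us) μ (.rcd vs) (.record fs .unboxed) r w
  | recW : μ p = some (.rcd us) → CorrFields us μ vs fs r w →
      Corr (.ptr p) μ (.rcd vs) (.record fs .writable) r ({p} ∪ w)
  | recR : μ p = some (.rcd us) → CorrFields us μ vs fs r ∅ →
      Corr (.ptr p) μ (.rcd vs) (.record fs .readOnly) ({p} ∪ r) ∅

/-- Field-wise correspondence, with non-aliasing of writable pointers;
    taken fields are skipped. -/
inductive CorrFields : List UVal → Store → List VVal → List (Ty × Bool) → Set Ptr → Set Ptr → Prop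
  | nil : CorrFields [] μ [] [] ∅ ∅
  | cons : Corr u μ v τ r w → CorrFields us μ vs fs r' w' →
      w ∩ (r' ∪ w') = ∅ → w' ∩ (r ∪ w) = ∅ →
      CorrFields (u :: us) μ (v :: vs) ((τ, false) :: fs) (r ∪ r') (w ∪ w')
  | taken : CorrFields us μ vs fs r w →
      CorrFields (u :: us) μ (v :: vs) ((τ, true) :: fs) r w
end

/-- Typing contexts (entries may be absent). -/
abbrev Ctx := List (Option Ty)

/-- Environment correspondence `U | μ : V : Γ [ro: r, rw: w]`, with
    non-aliasing of writable pointers between distinct bindings. -/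
inductive EnvCorr : List UVal → Store → List VVal → Ctx → Set Ptr → Set Ptr → Prop
  | nil : EnvCorr [] μ [] [] ∅ ∅
  | consSome : Corr u μ v τ r w → EnvCorr U μ V Γ r' w' →
      w ∩ (r' ∪ w') = ∅ → w' ∩ (r ∪ w) = ∅ →
      EnvCorr (u :: U) μ (v :: V) (some τ :: Γ) (r ∪ r') (w ∪ w')
  | consNone : EnvCorr U μ V Γ r w →
      EnvCorr (u :: U) μ (v :: V) (none :: Γ) r w

/-- Context weakening: dropped bindings must have a discardable type
    (a kind containing D). -/
inductive Weaken : Ctx → Ctx → Prop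
  | nil : Weaken [] []
  | keep : Weaken Γ Γ' → Weaken (o :: Γ) (o :: Γ')
  | drop : Kinding τ κ → Perm.D ∈ κ → Weaken Γ Γ' →
      Weaken (some τ :: Γ) (none :: Γ')

/-! A discardable type has no writable pointers (the kind of a writable box lacks D), so
dropping such a binding leaves the writable set unchanged and only shrinks the read-only one;
shrinking read-only sets preserves the non-aliasing side conditions. -/

mutual
theorem Corr.rw_eq_empty_of_kinding {u : UVal} {μ : Store} {v : VVal} {τ : Ty}
    {r w : Set Ptr} {κ : Kind} (hD : Perm.D ∈ κ) :
    Corr u μ v τ r w → Kinding τ κ → w = ∅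
  | .lit, _ => rfl
  | .unit, _ => rfl
  | .recU hfs, .record _ hk => CorrFields.rw_eq_empty_of_kinding hD hfs hk
  | .recW _ _, .record hsub _ => by simpa [kindOf] using hsub hD
  | .recR _ _, _ => rfl

theorem CorrFields.rw_eq_empty_of_kinding {us : List UVal} {μ : Store} {vs : List VVal}
    {fs : List (Ty × Bool)} {r w : Set Ptr} {κ : Kind} (hD : Perm.D ∈ κ) :
    CorrFields us μ vs fs r w → (∀ p ∈ fs, p.2 = false → Kinding p.1 κ) → w = ∅
  | .nil, _ => rfl
  | .cons hc hcs _ _, hk => by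
    rw [Corr.rw_eq_empty_of_kinding hD hc (hk _ List.mem_cons_self rfl),
      CorrFields.rw_eq_empty_of_kinding hD hcs fun p hp => hk p (List.mem_cons_of_mem _ hp),
      Set.union_empty]
  | .taken hcs, hk =>
    CorrFields.rw_eq_empty_of_kinding hD hcs fun p hp => hk p (List.mem_cons_of_mem _ hp)
end

/-- Weakening respects environment typing. -/
theorem weaken_respects_envCorr {U : List UVal} {μ : Store} {V : List VVal}
    {Γ Γ' : Ctx} {r w : Set Ptr}
    (h : EnvCorr U μ V Γ r w) (hw : Weaken Γ Γ') :
    ∃ r' ⊆ r, EnvCorr U μ V Γ' r' w := by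
  induction hw generalizing U V r w with
  | nil =>
    cases h
    exact ⟨∅, subset_rfl, .nil⟩
  | keep _ ih =>
    cases h with
    | consSome hc hrest hdisj hdisj' =>
      obtain ⟨r', hr', hrest'⟩ := ih hrest
      exact ⟨_ ∪ r', Set.union_subset_union_right _ hr',
        .consSome hc hrest' (Set.subset_eq_empty (by gcongr) hdisj) hdisj'⟩
    | consNone hrest =>
      obtain ⟨r', hr', hrest'⟩ := ih hrest
      exact ⟨r', hr', .consNone hrest'⟩
  | drop hk hD _ ih =>
    cases h with
    | consSome hc hrest _ _ =>
      obtain ⟨r', hr', hrest'⟩ := ih hrest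
      rw [Corr.rw_eq_empty_of_kinding hD hc hk, Set.empty_union]
      exact ⟨r', hr'.trans Set.subset_union_right, .consNone hrest'⟩
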